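/- arXiv:1609.03640 — 2 statements merged into one kernel-verified Lean document; each statement's English description precedes it below -/
import Mathlib

section
/- One-step confluence implies all maximal reduction sequences to a normal form have the same length: if R has the strong diamond property (a R b → a R c → b = c ∨ ∃ d, b R d ∧ c R d), and there are reduction sequences of lengths m and n from a to a normal form, then m = n. -/
inductive ReachN {α : Type*} (R : α → α → Prop) : α → ℕ → α → Prop
  | refl (a : α) : ReachN R a 0 a
  | step {a b c : α} {n : ℕ} : R a b → ReachN R b n c → ReachN R a (n + 1) c

/-!
Under the strong diamond property, any first step `a → a'` can be absorbed into a reduction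
`a →ⁿ b` to a normal form: closing the diamonds step by step along the reduction yields
`a' →ⁿ⁻¹ b`. Peeling off the first step of one reduction and absorbing it into the other
then gives the result by induction on the length.
-/

def StrongDiamond {α : Type*} (R : α → α → Prop) : Prop :=
  ∀ a b c, R a b → R a c → b = c ∨ ∃ d, R b d ∧ R c d

namespace ReachN

variable {α : Type*} {R : α → α → Prop}

theorem eq_zero_of_normal {a b : α} {n : ℕ} (h : ReachN R a n b) (ha : ∀ d, ¬ R a d) :
    n = 0 := by
  cases h with
  | refl => rfl
  | step hab _ => exact absurd hab (ha _)

theorem exists_eq_succ_of_rel (hd : StrongDiamond R) {a a' b : α} {n : ℕ}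
    (h : ReachN R a n b) (hb : ∀ d, ¬ R b d) (haa' : R a a') :
    ∃ k, n = k + 1 ∧ ReachN R a' k b := by
  induction h generalizing a' with
  | refl => exact absurd haa' (hb _)
  | @step a c b k hac hcb ih =>
    rcases hd a a' c haa' hac with rfl | ⟨d, ha'd, hcd⟩
    · exact ⟨k, rfl, hcb⟩
    · obtain ⟨j, rfl, hdb⟩ := ih hb hcd
      exact ⟨j + 1, rfl, step ha'd hdb⟩

end ReachN

theorem diamond_same_length {α : Type*} (R : α → α → Prop)
    (hd : ∀ a b c, R a b → R a c → b = c ∨ ∃ d, R b d ∧ R c d)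
    (a b c : α) (m n : ℕ)
    (hab : ReachN R a m b) (hac : ReachN R a n c)
    (hb : ∀ d, ¬ R b d) (hc : ∀ d, ¬ R c d) : m = n := by
  induction hab generalizing n with
  | refl => exact (hac.eq_zero_of_normal hb).symm
  | step ha₁ _ ih =>
    obtain ⟨l, rfl, ha₁c⟩ := hac.exists_eq_succ_of_rel hd hc ha₁
    rw [ih l ha₁c hb]
end

section
/- The stateless running-total network with feedback is equivalent to the stateful one: the stream W defined by W = 0 ::ₛ zipWith (+) U W satisfies zipWith (+) U W = out 0 U, where out is the stateful running-total process. -/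
/-! The feedback channel `W` carries the state of `out`. If `W` starts at `x`, then `W.tail`
starts at `x + U.head`, which is exactly the state `out x U` passes on, and `W.tail` satisfies the
same feedback equation with input `U.tail`. Induction on the index, with the starting state
generalised, gives the result. -/

namespace Stream'

variable {α : Type*} [AddCommMagma α]

theorem head_tail_of_tail_eq_zip_add {U W : Stream' α} (hW : W.tail = zip (· + ·) U W) :
    W.tail.head = W.head + U.head := by
  rw [hW, head_zip, add_comm]

theorem tail_tail_of_tail_eq_zip_add {U W : Stream' α} (hW : W.tail = zip (· + ·) U W) :
    W.tail.tail = zip (· + ·) U.tail W.tail :=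
  (congrArg tail hW).trans (tail_zip _ U W)

theorem get_zip_add_eq_of_tail_eq_zip_add (out : α → Stream' α → Stream' α)
    (hout : ∀ x S, out x S = (x + S.head) :: out (x + S.head) S.tail) (n : ℕ) :
    ∀ {U W : Stream' α}, W.tail = zip (· + ·) U W →
      (zip (· + ·) U W).get n = (out W.head U).get n := by
  induction n with
  | zero =>
    intro U W _
    rw [hout, get_zero_cons]
    exact add_comm _ _
  | succ n ih =>
    intro U W hW
    rw [hout, get_succ_cons, get_succ, tail_zip, ← head_tail_of_tail_eq_zip_add hW]
    exact ih (tail_tail_of_tail_eq_zip_add hW)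

end Stream'

theorem feedback_running_total (out : ℕ → Stream' ℕ → Stream' ℕ)
    (hout : ∀ x S, out x S = Stream'.cons (x + S.head) (out (x + S.head) S.tail))
    (U W : Stream' ℕ)
    (hW1 : W.head = 0) (hW2 : W.tail = Stream'.zip (· + ·) U W)
    (n : ℕ) :
    (Stream'.zip (· + ·) U W).get n = (out 0 U).get n := by
  rw [← hW1]
  exact Stream'.get_zip_add_eq_of_tail_eq_zip_add out hout n hW2
end
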